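/- Let H be a Hilbert space and A, B closed subspaces. For any a₁, a₂ ∈ A, the inner product ⟨P_{A∩B}^⊥ a₁, P_{A∩B}^⊥ a₂⟩ equals the sum over k ≥ 0 of ⟨P_B^⊥ (P_A^⊥ P_B^⊥)^k a₁, a₂⟩. -/

import Mathlib

open scoped InnerProductSpace

/-- The orthogonal projection of `H` onto the closed subspace `K`, as a map `H →L[ℂ] H`. -/
noncomputable def projCLM {H : Type*} [NormedAddCommGroup H] [InnerProductSpace ℂ H]
    (K : Submodule ℂ H) [K.HasOrthogonalProjection] : H →L[ℂ] H :=
  K.subtypeL.comp K.orthogonalProjectionOnto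

/-!
Put `S = P_A P_B P_A = (P_B P_A)* (P_B P_A)`, so `0 ≤ S ≤ 1` and `S ^ (k + 1) ≤ S ^ k`.
For `a₁, a₂ ∈ A` the `k`-th term is `⟪(S ^ k - S ^ (k + 1)) a₁, a₂⟫`, by the identity
`p (1 - q) ((1 - p) (1 - q)) ^ k p = (pqp) ^ k p - (pqp) ^ (k + 1)` for idempotents `p, q`.
On the diagonal these terms are nonnegative, so the series converges unconditionally as soon as
its partial sums `⟪z - S ^ n z, z⟫` do; and `S ^ n z → P_{A ∩ B} z` (von Neumann):
`‖S ^ n z - S ^ m z‖²` is a combination of values of the convergent antitone sequence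
`⟪S ^ k z, z⟫`, and the limit is a fixed point of `S`, i.e. a point of `A ∩ B`, with `z` minus
it orthogonal to `A ∩ B`. Polarization passes from the diagonal to `(a₁, a₂)`.
-/

open Filter Topology

theorem IsIdempotentElem.mul_one_sub_mul_pow_mul {R : Type*} [Ring R] {p q : R}
    (hp : IsIdempotentElem p) (hq : IsIdempotentElem q) (k : ℕ) :
    p * (1 - q) * ((1 - p) * (1 - q)) ^ k * p = (p * q * p) ^ k * p - (p * q * p) ^ (k + 1) := by
  have hp' : ∀ x, x * p * p = x * p := fun x => by rw [mul_assoc, hp.eq]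
  have hq' : ∀ x, x * q * q = x * q := fun x => by rw [mul_assoc, hq.eq]
  have hstep : p * (1 - q) * ((1 - p) * (1 - q)) = p * q * p * (p * (1 - q)) := by
    simp only [mul_sub, sub_mul, mul_one, one_mul, ← mul_assoc, hp', hq', hp.eq]
    abel
  induction k with
  | zero => simp [mul_sub, sub_mul, hp.eq]
  | succ k ih =>
    calc p * (1 - q) * ((1 - p) * (1 - q)) ^ (k + 1) * p
        = p * q * p * (p * (1 - q) * ((1 - p) * (1 - q)) ^ k * p) := by
          rw [pow_succ', ← mul_assoc, hstep]; simp only [mul_assoc]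
      _ = (p * q * p) ^ (k + 1) * p - (p * q * p) ^ (k + 1 + 1) := by
          rw [ih, mul_sub, ← mul_assoc, ← pow_succ', ← pow_succ']

open scoped ComplexOrder in
theorem Complex.hasSum_of_nonneg_of_tendsto_sum {f : ℕ → ℂ} {l : ℂ} (hf : ∀ n, 0 ≤ f n)
    (hl : Tendsto (fun n => ∑ i ∈ Finset.range n, f i) atTop (𝓝 l)) : HasSum f l := by
  have hf_re : f = fun n => ((f n).re : ℂ) :=
    funext fun n => Complex.eq_re_of_ofReal_le (r := 0) (by simpa using hf n)
  have hre : HasSum (fun n => (f n).re) l.re := by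
    refine (hasSum_iff_tendsto_nat_of_nonneg (fun n => (Complex.nonneg_iff.1 (hf n)).1) _).2 ?_
    simpa only [Function.comp_def, Complex.re_sum] using (Complex.continuous_re.tendsto l).comp hl
  have hsum : HasSum f l.re := by
    rw [hf_re]; exact Complex.hasSum_ofReal.2 hre
  rwa [tendsto_nhds_unique hl hsum.tendsto_sum_nat]

section PositiveContraction

open scoped ComplexOrder

variable {H : Type*} [NormedAddCommGroup H] [InnerProductSpace ℂ H] [CompleteSpace H]
  {T : H →L[ℂ] H}

theorem IsSelfAdjoint.inner_pow_apply_pow_apply (hT : IsSelfAdjoint T) (x : H) (n m : ℕ) :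
    ⟪(T ^ n) x, (T ^ m) x⟫_ℂ = ⟪(T ^ (n + m)) x, x⟫_ℂ := by
  rw [add_comm, pow_add]
  exact ((hT.pow m).isSymmetric _ _).symm

theorem inner_pow_sub_pow_apply_self_nonneg (h0 : 0 ≤ T) (h1 : T ≤ 1) {n m : ℕ} (hnm : n ≤ m)
    (x : H) : 0 ≤ ⟪(T ^ n - T ^ m) x, x⟫_ℂ :=
  ((ContinuousLinearMap.le_def _ _).1 (CStarAlgebra.pow_antitone h0 h1 hnm)).inner_nonneg_left x

theorem cauchySeq_pow_apply_of_nonneg_of_le_one (h0 : 0 ≤ T) (h1 : T ≤ 1) (x : H) :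
    CauchySeq fun n => (T ^ n) x := by
  set c : ℕ → ℝ := fun k => RCLike.re ⟪(T ^ k) x, x⟫_ℂ
  have hc_anti : Antitone c := fun n m hnm => by
    have := (Complex.nonneg_iff.1 (inner_pow_sub_pow_apply_self_nonneg h0 h1 hnm x)).1
    simpa [c, inner_sub_left] using this
  have hc_nonneg : ∀ k, 0 ≤ c k := fun k =>
    ((ContinuousLinearMap.nonneg_iff_isPositive _).1
      (CStarAlgebra.pow_nonneg h0 k)).re_inner_nonneg_left x
  obtain ⟨L, hL⟩ : ∃ L, Tendsto c atTop (𝓝 L) :=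
    ⟨_, tendsto_atTop_ciInf hc_anti ⟨0, Set.forall_mem_range.2 hc_nonneg⟩⟩
  have hT := IsSelfAdjoint.of_nonneg h0
  have hdist : ∀ n m,
      dist ((T ^ n) x) ((T ^ m) x) = √(c (n + n) - 2 * c (n + m) + c (m + m)) := by
    intro n m
    rw [dist_eq_norm, ← Real.sqrt_sq (norm_nonneg _), norm_sub_sq (𝕜 := ℂ),
      @norm_sq_eq_re_inner ℂ, @norm_sq_eq_re_inner ℂ, hT.inner_pow_apply_pow_apply,
      hT.inner_pow_apply_pow_apply, hT.inner_pow_apply_pow_apply]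
  have hc_comp : ∀ g : ℕ × ℕ → ℕ, Monotone g → (∀ b, b ≤ g (b, b)) →
      Tendsto (fun p => c (g p)) atTop (𝓝 L) := fun g hg hb =>
    hL.comp (tendsto_atTop_atTop_of_monotone hg fun b => ⟨(b, b), hb b⟩)
  rw [cauchySeq_iff_tendsto_dist_atTop_0]
  simp_rw [hdist]
  have := (((hc_comp (fun p => p.1 + p.1) (monotone_fst.add monotone_fst) (by omega)).sub
    ((hc_comp (fun p => p.1 + p.2) (monotone_fst.add monotone_snd) (by omega)).const_mul 2)).add
    (hc_comp (fun p => p.2 + p.2) (monotone_snd.add monotone_snd) (by omega))).sqrt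
  rwa [show L - 2 * L + L = 0 by ring, Real.sqrt_zero] at this

theorem IsSelfAdjoint.starProjection_eq_of_tendsto_pow_apply (hT : IsSelfAdjoint T)
    {K : Submodule ℂ H} [K.HasOrthogonalProjection] (hK : ∀ y, T y = y ↔ y ∈ K) {x y : H}
    (hy : Tendsto (fun n => (T ^ n) x) atTop (𝓝 y)) : K.starProjection x = y := by
  have hTy : T y = y := by
    refine tendsto_nhds_unique ((T.continuous.tendsto y).comp hy) ?_
    simpa only [Function.comp_def, pow_succ', mul_apply_eq_comp] using
      hy.comp (tendsto_add_atTop_nat 1)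
  refine Submodule.eq_starProjection_of_mem_of_inner_eq_zero ((hK y).1 hTy) fun w hw => ?_
  have hfix : ∀ n, (T ^ n) w = w := fun n => by
    rw [FunLike.coe_pow_eq_iterate]; exact Function.iterate_fixed ((hK w).2 hw) n
  have hlim : Tendsto (fun n => ⟪(T ^ n) x, w⟫_ℂ) atTop (𝓝 ⟪x, w⟫_ℂ) := by
    have hsymm : ∀ n, ⟪(T ^ n) x, w⟫_ℂ = ⟪x, (T ^ n) w⟫_ℂ := fun n =>
      (hT.pow n).isSymmetric x w
    simp only [hsymm, hfix]
    exact tendsto_const_nhds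
  rw [inner_sub_left, tendsto_nhds_unique (hy.inner tendsto_const_nhds) hlim, sub_self]

theorem hasSum_inner_pow_sub_pow_succ_apply_self (h0 : 0 ≤ T) (h1 : T ≤ 1) {x y : H}
    (hy : Tendsto (fun n => (T ^ n) x) atTop (𝓝 y)) :
    HasSum (fun k => ⟪(T ^ k - T ^ (k + 1)) x, x⟫_ℂ) ⟪x - y, x⟫_ℂ := by
  refine Complex.hasSum_of_nonneg_of_tendsto_sum
    (fun k => inner_pow_sub_pow_apply_self_nonneg h0 h1 k.le_succ x) ?_
  simp only [sub_apply, inner_sub_left,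
    Finset.sum_range_sub' (fun k => ⟪(T ^ k) x, x⟫_ℂ), pow_zero, one_apply_eq_self]
  exact tendsto_const_nhds.sub (hy.inner tendsto_const_nhds)

end PositiveContraction

theorem hasSum_inner_of_forall_hasSum_inner_self {H : Type*} [NormedAddCommGroup H]
    [InnerProductSpace ℂ H] {G : ℕ → H →L[ℂ] H} {T : H →L[ℂ] H}
    (h : ∀ z, HasSum (fun k => ⟪G k z, z⟫_ℂ) ⟪T z, z⟫_ℂ) (x y : H) :
    HasSum (fun k => ⟪G k x, y⟫_ℂ) ⟪T x, y⟫_ℂ := by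
  have hpol : ∀ F : H →L[ℂ] H, ⟪F x, y⟫_ℂ = _ := fun F =>
    inner_map_polarization' (F : H →ₗ[ℂ] H) x y
  simp only [hpol]
  exact ((((h _).sub (h _)).sub ((h _).mul_left Complex.I)).add
    ((h _).mul_left Complex.I)).div_const 4

section Projections

variable {H : Type*} [NormedAddCommGroup H] [InnerProductSpace ℂ H]

theorem projCLM_eq_starProjection (K : Submodule ℂ H) [K.HasOrthogonalProjection] :
    projCLM K = K.starProjection :=
  rfl

theorem isIdempotentElem_projCLM (K : Submodule ℂ H) [K.HasOrthogonalProjection] :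
    IsIdempotentElem (projCLM K) :=
  K.isIdempotentElem_starProjection

variable (A B : Submodule ℂ H) [A.HasOrthogonalProjection] [B.HasOrthogonalProjection]

noncomputable def projSandwich : H →L[ℂ] H := projCLM A * projCLM B * projCLM A

theorem norm_projSandwich_le : ‖projSandwich A B‖ ≤ 1 := by
  have hA := A.starProjection_norm_le
  have hB := B.starProjection_norm_le
  calc ‖projSandwich A B‖ ≤ ‖A.starProjection‖ * ‖B.starProjection‖ * ‖A.starProjection‖ :=
        (norm_mul_le _ _).trans (mul_le_mul_of_nonneg_right (norm_mul_le _ _) (norm_nonneg _))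
    _ ≤ 1 := mul_le_one₀ (mul_le_one₀ hA (norm_nonneg _) hB) (norm_nonneg _) hA

theorem projSandwich_apply_eq_self_iff {x : H} : projSandwich A B x = x ↔ x ∈ A ⊓ B := by
  simp only [projSandwich, projCLM_eq_starProjection, mul_apply_eq_comp]
  constructor
  · intro hx
    have hxA : x ∈ A := hx ▸ A.starProjection_apply_mem _
    rw [A.starProjection_eq_self_iff.2 hxA] at hx
    have hnorm : ‖B.starProjection x‖ = ‖x‖ := by
      refine le_antisymm (B.norm_starProjection_apply_le x) ?_
      calc ‖x‖ = ‖A.starProjection (B.starProjection x)‖ := by rw [hx]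
        _ ≤ ‖B.starProjection x‖ := A.norm_starProjection_apply_le _
    exact ⟨hxA, (B.mem_iff_norm_starProjection x).2 hnorm⟩
  · rintro ⟨hxA, hxB⟩
    rw [A.starProjection_eq_self_iff.2 hxA, B.starProjection_eq_self_iff.2 hxB,
      A.starProjection_eq_self_iff.2 hxA]

theorem inner_one_sub_projCLM_mul_pow_apply {a₁ a₂ : H} (ha₁ : a₁ ∈ A) (ha₂ : a₂ ∈ A)
    (k : ℕ) :
    ⟪(1 - projCLM B) ((((1 - projCLM A) * (1 - projCLM B)) ^ k) a₁), a₂⟫_ℂ =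
      ⟪(projSandwich A B ^ k - projSandwich A B ^ (k + 1)) a₁, a₂⟫_ℂ := by
  have hP : ∀ {a}, a ∈ A → projCLM A a = a := fun ha => A.starProjection_eq_self_iff.2 ha
  have hP₂ : ∀ u, ⟪projCLM A u, a₂⟫_ℂ = ⟪u, a₂⟫_ℂ := fun u => by
    rw [projCLM_eq_starProjection, A.inner_starProjection_left_eq_right,
      ← projCLM_eq_starProjection, hP ha₂]
  calc ⟪(1 - projCLM B) ((((1 - projCLM A) * (1 - projCLM B)) ^ k) a₁), a₂⟫_ℂ
      = ⟪(projCLM A * (1 - projCLM B) * ((1 - projCLM A) * (1 - projCLM B)) ^ k * projCLM A) a₁,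
          a₂⟫_ℂ := by
        simp only [mul_apply_eq_comp, hP ha₁, hP₂]
    _ = ⟪(projSandwich A B ^ k * projCLM A - projSandwich A B ^ (k + 1)) a₁, a₂⟫_ℂ := by
        rw [projSandwich,
          (isIdempotentElem_projCLM A).mul_one_sub_mul_pow_mul (isIdempotentElem_projCLM B)]
    _ = ⟪(projSandwich A B ^ k - projSandwich A B ^ (k + 1)) a₁, a₂⟫_ℂ := by
        simp only [sub_apply, mul_apply_eq_comp, hP ha₁]

variable [CompleteSpace H]

theorem projSandwich_eq_star_mul_self :
    projSandwich A B = star (projCLM B * projCLM A) * (projCLM B * projCLM A) := by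
  simp only [projSandwich, projCLM_eq_starProjection, star_mul,
    (isSelfAdjoint_starProjection _).star_eq, mul_assoc,
    ← mul_assoc B.starProjection, B.isIdempotentElem_starProjection.eq]

theorem projSandwich_nonneg : 0 ≤ projSandwich A B :=
  projSandwich_eq_star_mul_self A B ▸ star_mul_self_nonneg _

theorem projSandwich_le_one : projSandwich A B ≤ 1 :=
  (CStarAlgebra.norm_le_one_iff_of_nonneg _ (projSandwich_nonneg A B)).1 (norm_projSandwich_le A B)

theorem tendsto_projSandwich_pow_apply [(A ⊓ B).HasOrthogonalProjection] (x : H) :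
    Tendsto (fun n => (projSandwich A B ^ n) x) atTop (𝓝 (projCLM (A ⊓ B) x)) := by
  obtain ⟨y, hy⟩ := cauchySeq_tendsto_of_complete
    (cauchySeq_pow_apply_of_nonneg_of_le_one (projSandwich_nonneg A B) (projSandwich_le_one A B) x)
  rwa [projCLM_eq_starProjection, (IsSelfAdjoint.of_nonneg (projSandwich_nonneg A B))
    |>.starProjection_eq_of_tendsto_pow_apply (fun _ => projSandwich_apply_eq_self_iff A B) hy]

end Projections

theorem alternating_projection_inner_rep_general {H : Type*} [NormedAddCommGroup H]
    [InnerProductSpace ℂ H] [CompleteSpace H] (A B : Submodule ℂ H)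
    [CompleteSpace A] [CompleteSpace B] [CompleteSpace ↥(A ⊓ B)]
    (a₁ a₂ : H) (ha₁ : a₁ ∈ A) (ha₂ : a₂ ∈ A) :
    ⟪(1 - projCLM (A ⊓ B)) a₁, (1 - projCLM (A ⊓ B)) a₂⟫_ℂ =
      ∑' k : ℕ,
        ⟪(1 - projCLM B) ((((1 - projCLM A) * (1 - projCLM B)) ^ k) a₁), a₂⟫_ℂ := by
  have hsum : HasSum
      (fun k => ⟪(projSandwich A B ^ k - projSandwich A B ^ (k + 1)) a₁, a₂⟫_ℂ)
      ⟪(1 - projCLM (A ⊓ B)) a₁, a₂⟫_ℂ := by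
    refine hasSum_inner_of_forall_hasSum_inner_self (fun z => ?_) a₁ a₂
    simpa using hasSum_inner_pow_sub_pow_succ_apply_self (projSandwich_nonneg A B)
      (projSandwich_le_one A B) (tendsto_projSandwich_pow_apply A B z)
  rw [tsum_congr (inner_one_sub_projCLM_mul_pow_apply A B ha₁ ha₂), hsum.tsum_eq,
    projCLM_eq_starProjection, ← Submodule.starProjection_orthogonal',
    ← Submodule.inner_starProjection_left_eq_right, ← mul_apply_eq_comp,
    (Submodule.isIdempotentElem_starProjection _).eq]

theorem alternating_projection_inner_rep {H : Type*} [NormedAddCommGroup H]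
    [InnerProductSpace ℂ H] [CompleteSpace H] (A B : Submodule ℂ H)
    (hA : IsClosed (A : Set H)) (hB : IsClosed (B : Set H))
    [CompleteSpace A] [CompleteSpace B] [CompleteSpace ↥(A ⊓ B)]
    (a₁ a₂ : H) (ha₁ : a₁ ∈ A) (ha₂ : a₂ ∈ A) :
    ⟪(1 - projCLM (A ⊓ B)) a₁, (1 - projCLM (A ⊓ B)) a₂⟫_ℂ =
      ∑' k : ℕ,
        ⟪(1 - projCLM B) ((((1 - projCLM A) * (1 - projCLM B)) ^ k) a₁), a₂⟫_ℂ :=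
  alternating_projection_inner_rep_general A B a₁ a₂ ha₁ ha₂
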